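/- arXiv:2104.13505 — 2 statements merged into one kernel-verified Lean document; each statement's English description precedes it below -/
import Mathlib

section
/- If p is a prime power, then f(p, p²) = p². -/
/-!
Double counting incidences between the members and the points of `A` gives the upper bound:
the members through a fixed point of `A` must have pairwise disjoint `B`-sides, so there are at
most `⌊N/k⌋` of them. For `N = p²`, `k = p` the bound `p²` is attained by the affine plane over
a field `K` with `p` elements: the line `y = m x + c` has `A`-side the line itself and `B`-side
the column `{m} × K`. Two distinct lines are disjoint exactly when they are parallel, i.e. exactly
when their columns meet.
-/

open Finset

/-- The elements of `S` on the `A` side (left side). -/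
def sideA {N : ℕ} (S : Finset (Fin N ⊕ Fin N)) : Finset (Fin N ⊕ Fin N) :=
  S.filter (fun x => x.isLeft)

/-- The elements of `S` on the `B` side (right side). -/
def sideB {N : ℕ} (S : Finset (Fin N ⊕ Fin N)) : Finset (Fin N ⊕ Fin N) :=
  S.filter (fun x => x.isRight)

/-- A family of subsets of `A ∪ B` is semiintersecting if every member meets each side in
exactly `k` elements, and any two distinct members are disjoint in exactly one of the sides. -/
def Semiintersecting (k N : ℕ) (F : Finset (Finset (Fin N ⊕ Fin N))) : Prop :=
  (∀ S ∈ F, (sideA S).card = k ∧ (sideB S).card = k) ∧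
  (∀ S ∈ F, ∀ T ∈ F, S ≠ T →
      ((sideA S ∩ sideA T = ∅) ↔ (sideB S ∩ sideB T ≠ ∅)))

/-- `f k N`: the maximum cardinality of a semiintersecting family with parameters `k`, `N`. -/
noncomputable def semiMax (k N : ℕ) : ℕ :=
  sSup {n | ∃ F : Finset (Finset (Fin N ⊕ Fin N)), Semiintersecting k N F ∧ F.card = n}

lemma sideA_eq_map_toLeft {N : ℕ} (S : Finset (Fin N ⊕ Fin N)) :
    sideA S = S.toLeft.map .inl := by
  ext (x | x) <;> simp [sideA]

lemma sideB_eq_map_toRight {N : ℕ} (S : Finset (Fin N ⊕ Fin N)) :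
    sideB S = S.toRight.map .inr := by
  ext (x | x) <;> simp [sideB]

lemma semiintersecting_iff {k N : ℕ} {F : Finset (Finset (Fin N ⊕ Fin N))} :
    Semiintersecting k N F ↔
      (∀ S ∈ F, #S.toLeft = k ∧ #S.toRight = k) ∧
      ∀ S ∈ F, ∀ T ∈ F, S ≠ T →
        (Disjoint S.toLeft T.toLeft ↔ ¬Disjoint S.toRight T.toRight) := by
  simp only [Semiintersecting, sideA_eq_map_toLeft, sideB_eq_map_toRight, card_map,
    ← map_inter, ne_eq, map_eq_empty, ← disjoint_iff_inter_eq_empty]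

namespace Semiintersecting

variable {k N : ℕ} {F : Finset (Finset (Fin N ⊕ Fin N))}

lemma card_filter_inl_mem_mul_le (hF : Semiintersecting k N F) (a : Fin N) :
    #{S ∈ F | .inl a ∈ S} * k ≤ N := by
  rw [semiintersecting_iff] at hF
  set G := {S ∈ F | .inl a ∈ S}
  have hG : ∀ S ∈ G, S ∈ F ∧ a ∈ S.toLeft := by simp [G]
  have hdisj : (G : Set (Finset (Fin N ⊕ Fin N))).PairwiseDisjoint toRight := by
    intro S hS T hT hST
    obtain ⟨hSF, haS⟩ := hG S hS
    obtain ⟨hTF, haT⟩ := hG T hT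
    exact not_not.mp <| mt (hF.2 S hSF T hTF hST).mpr <| not_disjoint_iff.mpr ⟨a, haS, haT⟩
  calc #G * k = #(G.biUnion toRight) := by
        rw [card_biUnion hdisj, sum_const_nat fun S hS => (hF.1 S (hG S hS).1).2]
    _ ≤ N := (card_le_univ _).trans_eq (Fintype.card_fin N)

lemma card_le (hF : Semiintersecting k N F) (hk : 0 < k) : #F ≤ N * (N / k) / k := by
  have hF' := (semiintersecting_iff.mp hF).1
  rw [Nat.le_div_iff_mul_le hk]
  simpa using card_mul_le_card_mul (fun S a => .inl a ∈ S) (t := univ)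
    (fun S hS => (hF' S hS).1 ▸ card_le_card fun a => by simp [bipartiteAbove])
    (fun a _ => (Nat.le_div_iff_mul_le hk).mpr (hF.card_filter_inl_mem_mul_le a))

lemma card_le_semiMax (hF : Semiintersecting k N F) : #F ≤ semiMax k N :=
  le_csSup ⟨Fintype.card (Finset (Fin N ⊕ Fin N)), by rintro _ ⟨G, -, rfl⟩; exact card_le_univ G⟩
    ⟨F, hF, rfl⟩

end Semiintersecting

theorem semiMax_le {k N : ℕ} (hk : 0 < k) : semiMax k N ≤ N * (N / k) / k :=
  csSup_le' <| by rintro _ ⟨F, hF, rfl⟩; exact hF.card_le hk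

theorem card_le_semiMax_of_disjoint_iff {ι : Type*} [Fintype ι] {k N : ℕ} (hk : 0 < k)
    (L R : ι → Finset (Fin N)) (hL : ∀ i, #(L i) = k) (hR : ∀ i, #(R i) = k)
    (hLR : ∀ i j, i ≠ j → (Disjoint (L i) (L j) ↔ ¬Disjoint (R i) (R j))) :
    Fintype.card ι ≤ semiMax k N := by
  set F := univ.image fun i => (L i).disjSum (R i)
  have hF : Semiintersecting k N F := by
    refine semiintersecting_iff.mpr ⟨?_, ?_⟩
    · simp [F, hL, hR]
    · simp only [F, mem_image, mem_univ, true_and]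
      rintro _ ⟨i, rfl⟩ _ ⟨j, rfl⟩ hij
      simpa using hLR i j fun h => hij (h ▸ rfl)
  -- Equal members would be non-disjoint from each other on both sides, contradicting `hLR`.
  have hinj : Function.Injective fun i => (L i).disjSum (R i) := by
    intro i j hij
    obtain ⟨hLij, hRij⟩ := disjSum_inj.mp hij
    by_contra hne
    have hLR_self := hLR i j hne
    rw [← hLij, ← hRij, disjoint_self_iff_empty, disjoint_self_iff_empty] at hLR_self
    exact (card_pos.mp (hL i ▸ hk)).ne_empty <|
      hLR_self.mpr (card_pos.mp (hR i ▸ hk)).ne_empty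
  calc Fintype.card ι = #F := (card_image_of_injective _ hinj).symm
    _ ≤ semiMax k N := hF.card_le_semiMax

section AffinePlane

variable {K : Type*} [Field K]

lemma forall_mul_add_ne_iff (m c m' c' : K) :
    (∀ x, m * x + c ≠ m' * x + c') ↔ m = m' ∧ c ≠ c' := by
  refine ⟨fun h => ?_, fun ⟨hm, hc⟩ x => by rwa [hm, ne_eq, add_right_inj]⟩
  by_cases hm : m = m'
  · exact ⟨hm, by simpa [hm] using h 0⟩
  · refine absurd ?_ (h ((c' - c) / (m - m')))
    field_simp [sub_ne_zero.mpr hm]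
    ring

variable [Fintype K]

def affineLine (m c : K) : Finset (K × K) :=
  univ.map ⟨fun x => (x, m * x + c), fun _ _ h => (Prod.ext_iff.mp h).1⟩

lemma mem_affineLine {m c : K} {P : K × K} : P ∈ affineLine m c ↔ P.2 = m * P.1 + c := by
  simp only [affineLine, mem_map, mem_univ, true_and, Prod.ext_iff]
  exact ⟨fun ⟨x, hx, hy⟩ => hx ▸ hy.symm, fun h => ⟨P.1, rfl, h.symm⟩⟩

lemma disjoint_affineLine_iff (m c m' c' : K) :
    Disjoint (affineLine m c) (affineLine m' c') ↔ m = m' ∧ c ≠ c' := by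
  rw [disjoint_left, ← forall_mul_add_ne_iff]
  simp [mem_affineLine]

end AffinePlane

theorem sq_card_le_semiMax (K : Type*) [Field K] [Finite K] :
    Nat.card K ^ 2 ≤ semiMax (Nat.card K) (Nat.card K ^ 2) := by
  have := Fintype.ofFinite K
  have e : K × K ↪ Fin (Nat.card K ^ 2) :=
    (Fintype.equivFinOfCardEq (by simp [sq, Nat.card_eq_fintype_card])).toEmbedding
  have hLR : ∀ l l' : K × K, l ≠ l' →
      (Disjoint ((affineLine l.1 l.2).map e) ((affineLine l'.1 l'.2).map e) ↔
        ¬Disjoint (({l.1} ×ˢ univ).map e) (({l'.1} ×ˢ univ).map e)) := by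
    rintro ⟨m, c⟩ ⟨m', c'⟩ hne
    simp only [disjoint_map, disjoint_affineLine_iff, disjoint_product, disjoint_singleton,
      disjoint_self_iff_empty, univ_eq_empty_iff, not_isEmpty_of_nonempty, or_false, not_not]
    exact ⟨And.left, fun hm => ⟨hm, fun hc => hne (hm ▸ hc ▸ rfl)⟩⟩
  have hL : ∀ l : K × K, #((affineLine l.1 l.2).map e) = Nat.card K := by
    simp [affineLine, Nat.card_eq_fintype_card]
  have hR : ∀ l : K × K, #(({l.1} ×ˢ univ).map e) = Nat.card K := by
    simp [Nat.card_eq_fintype_card]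
  have h := card_le_semiMax_of_disjoint_iff Nat.card_pos _ _ hL hR hLR
  rwa [Fintype.card_prod, ← Nat.card_eq_fintype_card, ← sq] at h

theorem semiMax_primePow_sq_eq (p : ℕ) (hp : IsPrimePow p) :
    semiMax p (p ^ 2) = p ^ 2 := by
  have hp0 : 0 < p := hp.pos
  refine le_antisymm ((semiMax_le hp0).trans_eq ?_) ?_
  · rw [sq, Nat.mul_div_cancel _ hp0, Nat.mul_div_cancel _ hp0]
  · obtain ⟨q, n, hq, hn, rfl⟩ := hp
    have : Fact q.Prime := ⟨hq.nat_prime⟩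
    simpa only [GaloisField.card q n hn.ne'] using sq_card_le_semiMax (GaloisField q n)
end

section
/- If p is a prime power and N ≥ p³, then f(p,N) ≥ ⌊N/p⌋ − p² + p³. -/
open Finset

/-!
Let `F` be a field with `q` elements. On the `A` side take `q` copies of the plane `F²`, on the
`B` side one plane `F²`. The triple `(m, u, a)` gives the member made of the line `x = u y + a`
in the `m`-th `A`-plane and the line `y = m x + u` in the `B`-plane. Since lines `y = s x + c`
and `y = s' x + c'` meet iff `s ≠ s'` or `c = c'`, the members of `(m, u, a)` and `(m', u', a')`
meet on the `A` side iff `m = m'` and (`u ≠ u'` or `a = a'`), and on the `B` side iff `m ≠ m'`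
or `u = u'`: for distinct triples exactly one of the two happens. The `A` points left over
contain `⌊N/q⌋ - q²` disjoint blocks of size `q`, each paired with the vertical line `x = 0`,
which meets every line `y = m x + u`.
-/

lemma sideA_disjSum {N : ℕ} (s t : Finset (Fin N)) : sideA (s.disjSum t) = s.map .inl := by
  ext (x | x) <;> simp [sideA]

lemma sideB_disjSum {N : ℕ} (s t : Finset (Fin N)) : sideB (s.disjSum t) = t.map .inr := by
  ext (x | x) <;> simp [sideB]

lemma card_le_semiMax {k N : ℕ} {F : Finset (Finset (Fin N ⊕ Fin N))}
    (hF : Semiintersecting k N F) : #F ≤ semiMax k N :=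
  le_csSup ⟨Fintype.card (Finset (Fin N ⊕ Fin N)), by rintro _ ⟨G, -, rfl⟩; exact card_le_univ G⟩
    ⟨F, hF, rfl⟩

theorem card_le_semiMax_of_family {k N : ℕ} {ι α β : Type*} [Fintype ι]
    (eA : α ↪ Fin N) (eB : β ↪ Fin N) (A : ι → Finset α) (B : ι → Finset β)
    (hA : ∀ i, #(A i) = k) (hB : ∀ i, #(B i) = k)
    (hAB : ∀ i j, i ≠ j → (Disjoint (A i) (A j) ↔ ¬Disjoint (B i) (B j))) :
    Fintype.card ι ≤ semiMax k N := by
  classical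
  let S i : Finset (Fin N ⊕ Fin N) := ((A i).map eA).disjSum ((B i).map eB)
  have hS : Function.Injective S := by
    intro i j hij
    by_contra hne
    obtain ⟨hAij, hBij⟩ : A i = A j ∧ B i = B j := by simpa [S] using hij
    have := hAB i j hne
    rw [← hAij, ← hBij, disjoint_self_iff_empty, disjoint_self_iff_empty, ← card_eq_zero,
      ← card_eq_zero, hA, hB] at this
    exact (not_iff_self this.symm).elim
  have hSemi : Semiintersecting k N (univ.image S) := by
    refine ⟨?_, ?_⟩
    · rintro _ hS
      obtain ⟨i, -, rfl⟩ := mem_image.1 hS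
      simp [S, sideA_disjSum, sideB_disjSum, hA, hB]
    · rintro _ hS _ hT hST
      obtain ⟨i, -, rfl⟩ := mem_image.1 hS
      obtain ⟨j, -, rfl⟩ := mem_image.1 hT
      simp only [S, sideA_disjSum, sideB_disjSum, ne_eq, ← disjoint_iff_inter_eq_empty,
        disjoint_map]
      exact hAB i j (by rintro rfl; exact hST rfl)
  simpa [card_image_of_injective _ hS] using card_le_semiMax hSemi

lemma disjoint_image_univ_iff {γ α : Type*} [Fintype γ] [DecidableEq α] (f g : γ → α) :
    Disjoint (univ.image f) (univ.image g) ↔ ∀ x y, f x ≠ g y := by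
  simp only [disjoint_left, mem_image, mem_univ, true_and, not_exists, forall_exists_index,
    forall_apply_eq_imp_iff]
  exact ⟨fun h x y hxy => h x y hxy.symm, fun h x y hxy => h x y hxy.symm⟩

lemma exists_mul_add_eq_mul_add_iff {F : Type*} [Field F] {s s' c c' : F} :
    (∃ x, s * x + c = s' * x + c') ↔ s ≠ s' ∨ c = c' := by
  refine ⟨fun ⟨x, hx⟩ => or_iff_not_imp_left.2 fun h => ?_, ?_⟩
  · simpa [not_not.1 h] using hx
  · rintro (h | rfl)
    · refine ⟨(c' - c) / (s - s'), ?_⟩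
      field_simp [sub_ne_zero.2 h]
      ring
    · exact ⟨0, by simp⟩

section AffinePlanes

variable (F : Type*) [Field F] [Fintype F] [DecidableEq F] (M : ℕ)

def partA : Fin M ⊕ (F × F × F) → Finset ((Fin M × F) ⊕ (F × F × F))
  | .inl i => univ.image fun t => .inl (i, t)
  | .inr (m, u, a) => univ.image fun t => .inr (m, u * t + a, t)

def partB : Fin M ⊕ (F × F × F) → Finset (F × F)
  | .inl _ => univ.image fun t => (0, t)
  | .inr (m, u, _) => univ.image fun x => (x, m * x + u)

variable {F M}

lemma card_partA (i : Fin M ⊕ (F × F × F)) : #(partA F M i) = Fintype.card F := by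
  rcases i with i | ⟨m, u, a⟩ <;> refine card_image_of_injective _ fun x y h => ?_ <;>
    simp only [Sum.inl.injEq, Sum.inr.injEq, Prod.mk.injEq] at h
  exacts [h.2, h.2.2]

lemma card_partB (i : Fin M ⊕ (F × F × F)) : #(partB F M i) = Fintype.card F := by
  rcases i with i | ⟨m, u, a⟩ <;> refine card_image_of_injective _ fun x y h => ?_ <;>
    simp only [Prod.mk.injEq] at h
  exacts [h.2, h.1]

lemma disjoint_partA_inr_iff {m u a m' u' a' : F} :
    Disjoint (partA F M (.inr (m, u, a))) (partA F M (.inr (m', u', a'))) ↔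
      (m = m' → u = u' ∧ a ≠ a') := by
  simp only [partA, disjoint_image_univ_iff, ne_eq, Sum.inr.injEq, Prod.mk.injEq]
  have : (∀ x y, ¬(m = m' ∧ u * x + a = u' * y + a' ∧ x = y)) ↔
      ¬(m = m' ∧ ∃ x, u * x + a = u' * x + a') := by
    aesop
  rw [this, exists_mul_add_eq_mul_add_iff]
  tauto

lemma disjoint_partB_inr_iff {m u a m' u' a' : F} :
    Disjoint (partB F M (.inr (m, u, a))) (partB F M (.inr (m', u', a'))) ↔ m = m' ∧ u ≠ u' := by
  simp only [partB, disjoint_image_univ_iff, ne_eq, Prod.mk.injEq]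
  have : (∀ x y, ¬(x = y ∧ m * x + u = m' * y + u')) ↔ ¬∃ x, m * x + u = m' * x + u' := by
    aesop
  rw [this, exists_mul_add_eq_mul_add_iff]
  tauto

lemma disjoint_partA_iff_not_disjoint_partB {i j : Fin M ⊕ (F × F × F)} (hij : i ≠ j) :
    Disjoint (partA F M i) (partA F M j) ↔ ¬Disjoint (partB F M i) (partB F M j) := by
  rcases i with i | ⟨m, u, a⟩ <;> rcases j with j | ⟨m', u', a'⟩
  case inr.inr =>
    rw [disjoint_partA_inr_iff, disjoint_partB_inr_iff]
    simp only [ne_eq, Sum.inr.injEq, Prod.mk.injEq] at hij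
    tauto
  all_goals simp_all [partA, partB, disjoint_image_univ_iff, univ_eq_empty_iff]

end AffinePlanes

theorem le_semiMax_of_finiteField (F : Type*) [Field F] [Fintype F] {N : ℕ}
    (hN : Fintype.card F ^ 3 ≤ N) :
    N / Fintype.card F - Fintype.card F ^ 2 + Fintype.card F ^ 3 ≤
      semiMax (Fintype.card F) N := by
  classical
  set q := Fintype.card F
  set M := N / q - q ^ 2
  have hq : 0 < q := Fintype.card_pos
  have hA : M * q + q ^ 3 ≤ N := by
    have hcube : q ^ 2 * q = q ^ 3 := by ring
    have hdiv : q ^ 2 * q ≤ N / q * q :=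
      Nat.mul_le_mul_right q ((Nat.le_div_iff_mul_le hq).2 (hcube ▸ hN))
    have := Nat.div_mul_le_self N q
    rw [Nat.sub_mul]
    omega
  have hB : q ^ 2 ≤ N := (Nat.pow_le_pow_right hq (by norm_num)).trans hN
  obtain ⟨eA⟩ : Nonempty ((Fin M × F) ⊕ (F × F × F) ↪ Fin N) :=
    Function.Embedding.nonempty_of_card_le (by simpa [q, pow_succ, mul_assoc] using hA)
  obtain ⟨eB⟩ : Nonempty (F × F ↪ Fin N) :=
    Function.Embedding.nonempty_of_card_le (by simpa [q, sq] using hB)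
  simpa [q, M, pow_succ, mul_assoc] using card_le_semiMax_of_family eA eB (partA F M) (partB F M)
    card_partA card_partB fun _ _ => disjoint_partA_iff_not_disjoint_partB

theorem semiMax_bigN_primePow (p N : ℕ) (hp : IsPrimePow p) (hN : p ^ 3 ≤ N) :
    N / p - p ^ 2 + p ^ 3 ≤ semiMax p N := by
  obtain ⟨_⟩ : Nonempty (Field (Fin p)) := Fintype.nonempty_field_iff.2 (by simpa using hp)
  simpa using le_semiMax_of_finiteField (Fin p) (by simpa using hN)
end
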